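/- Let s = ([i_1,j_1],…,[i_r,j_r]) ∈ 𝕀_{n,+}^r with n ≥ n(s). Then there exists σ ∈ Σ_r with i_{σ(1)} ≥ i_{σ(2)} ≥ ⋯ ≥ i_{σ(r)} such that s_1 = ([i_{σ(1)},j_1],…,[i_{σ(r)},j_r]) ∈ 𝕀_{n,+}^r and s ∈ s̄_1[n]. -/

import Mathlib

open scoped Classical

/-- An interval `[i,j]` is encoded as the pair `(i,j)` of integers. -/
abbrev Intv := ℤ × ℤ

/-- Membership in `𝕀ₙ`: `0 ≤ j - i ≤ n + 1`. -/
def memI (n : ℕ) (a : Intv) : Prop := 0 ≤ a.2 - a.1 ∧ a.2 - a.1 ≤ (n : ℤ) + 1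

/-- The pair `([i₁,j₁],[i₂,j₂])` is connected (for the parameter `n`). -/
def Conn (n : ℕ) (a b : Intv) : Prop :=
  (b.1 < a.1 ∧ a.1 ≤ b.2 ∧ b.2 < a.2 ∧ 0 ≤ a.2 - b.1 ∧ a.2 - b.1 ≤ (n : ℤ) + 1) ∨
  (a.1 < b.1 ∧ b.1 ≤ a.2 ∧ a.2 < b.2 ∧ 0 ≤ b.2 - a.1 ∧ b.2 - a.1 ≤ (n : ℤ) + 1)

/-- The partial map `τ_{m,ℓ}`, with `none` playing the role of `0`. -/
noncomputable def tau (n : ℕ) {r : ℕ} (m l : Fin r) (s : Fin r → Intv) :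
    Option (Fin r → Intv) :=
  if Conn n (s m) (s l) then
    some (Function.update (Function.update s m ((s l).1, (s m).2)) l ((s m).1, (s l).2))
  else none

/-- A subset `J ⊆ 𝕀ₙ^r` is closed. -/
def IsClosedSet (n : ℕ) {r : ℕ} (J : Set (Fin r → Intv)) : Prop :=
  ∀ s ∈ J, ∀ m l : Fin r, m < l →
    (∀ s', tau n m l s = some s' → s' ∈ J) ∧
    ((s m).2 = (s l).2 → (fun u => s (Equiv.swap m l u)) ∈ J)

/-- `s̄[n]`: the smallest closed subset of `𝕀ₙ^r` containing `s`. -/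
def sbar (n : ℕ) {r : ℕ} (s : Fin r → Intv) : Set (Fin r → Intv) :=
  ⋂₀ {J | IsClosedSet n J ∧ s ∈ J}

/-- `s` is a closed element: `s̄[n] ⊆ Σ_r · s`. -/
def IsClosedElt (n : ℕ) {r : ℕ} (s : Fin r → Intv) : Prop :=
  ∀ s' ∈ sbar n s, ∃ w : Equiv.Perm (Fin r), s' = fun u => s (w u)

/-- `s ∈ 𝕀_{n,+}^r`: all entries are intervals and the right endpoints are
weakly decreasing. -/
def Iplus (n : ℕ) {r : ℕ} (s : Fin r → Intv) : Prop :=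
  (∀ t, memI n (s t)) ∧ ∀ p : ℕ, (hp : p + 1 < r) → (s ⟨p + 1, hp⟩).2 ≤ (s ⟨p, by omega⟩).2

/-- `Σ_r(s)`: the subgroup of `Σ_r` generated by the simple transpositions `σ_p`
with `j_p = j_{p+1}`. -/
def SigmaS {r : ℕ} (s : Fin r → Intv) : Subgroup (Equiv.Perm (Fin r)) :=
  Subgroup.closure { w | ∃ p : ℕ, ∃ hp : p + 1 < r,
      (s ⟨p, by omega⟩).2 = (s ⟨p + 1, hp⟩).2 ∧
      w = Equiv.swap ⟨p, by omega⟩ ⟨p + 1, hp⟩ }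

/-- One-step move relation generating the closure `sbar`. -/
def Step (n : ℕ) {r : ℕ} (x y : Fin r → Intv) : Prop :=
  (∃ m l : Fin r, m < l ∧ tau n m l x = some y) ∨
  (∃ m l : Fin r, m < l ∧ (x m).2 = (x l).2 ∧ y = fun u => x (Equiv.swap m l u))

lemma reach_mem {n r : ℕ} {x y : Fin r → Intv} (h : Relation.ReflTransGen (Step n) x y)
    {J : Set (Fin r → Intv)} (hJ : IsClosedSet n J) (hx : x ∈ J) : y ∈ J := by
  induction h with
  | refl => exact hx
  | tail _ hstep ih =>
    rcases hstep with ⟨m, l, hml, ht⟩ | ⟨m, l, hml, hj, rfl⟩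
    · exact (hJ _ ih m l hml).1 _ ht
    · exact (hJ _ ih m l hml).2 hj

lemma reach_sbar {n r : ℕ} {x y : Fin r → Intv} (h : Relation.ReflTransGen (Step n) x y) :
    y ∈ sbar n x :=
  Set.mem_sInter.mpr fun _J hJ => reach_mem h hJ.1 hJ.2

lemma step_iswap (n : ℕ) {r : ℕ} (x : Fin r → Intv) (m l : Fin r) (hml : m < l)
    (h1 : (x l).1 < (x m).1) (h2 : (x m).1 ≤ (x l).2) (h3 : (x l).2 ≤ (x m).2)
    (h5 : (x m).2 - (x l).1 ≤ (n : ℤ) + 1) :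
    Step n x (fun t => if t = m then ((x l).1, (x m).2)
      else if t = l then ((x m).1, (x l).2) else x t) := by
  have hne : m ≠ l := ne_of_lt hml
  by_cases hj : (x l).2 = (x m).2
  · right
    refine ⟨m, l, hml, hj.symm, funext fun u => ?_⟩
    by_cases hum : u = m
    · rw [hum]
      simp only [if_pos rfl, Equiv.swap_apply_left]
      exact Prod.ext rfl hj.symm
    · by_cases hul : u = l
      · rw [hul]
        simp only [if_neg hne.symm, if_pos rfl, Equiv.swap_apply_right]
        exact Prod.ext rfl hj
      · simp [hum, hul, Equiv.swap_apply_of_ne_of_ne hum hul]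
  · left
    refine ⟨m, l, hml, ?_⟩
    have hconn : Conn n (x m) (x l) :=
      Or.inl ⟨h1, h2, lt_of_le_of_ne h3 hj, by linarith, h5⟩
    rw [tau, if_pos hconn]
    congr 1
    funext t
    by_cases htl : t = l
    · subst htl
      simp [Function.update_apply, hne.symm]
    · by_cases htm : t = m
      · subst htm
        simp [Function.update_apply, htl, hne]
      · simp [Function.update_apply, htl, htm]

/-- Weak decrease of second components propagates to all pairs. -/
lemma jdec {r : ℕ} {s : Fin r → Intv}
    (h : ∀ p : ℕ, (hp : p + 1 < r) → (s ⟨p + 1, hp⟩).2 ≤ (s ⟨p, by omega⟩).2) :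
    ∀ p q : Fin r, p ≤ q → (s q).2 ≤ (s p).2 := by
  have key : ∀ b : ℕ, ∀ hb : b < r, ∀ a : ℕ, ∀ ha : a < r, a ≤ b →
      (s ⟨b, hb⟩).2 ≤ (s ⟨a, ha⟩).2 := by
    intro b
    induction b with
    | zero =>
      intro hb a ha hab
      have : a = 0 := by omega
      subst this
      exact le_refl _
    | succ b ih =>
      intro hb a ha hab
      rcases Nat.lt_or_ge a (b + 1) with h' | h'
      · exact le_trans (h b hb) (ih (by omega) a ha (by omega))
      · have : a = b + 1 := by omega
        subst this
        exact le_refl _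
  intro p q hpq
  have := key q q.isLt p p.isLt hpq
  simpa using this

/-- Rearrangement: sorting the left endpoints decreasingly against decreasing
right endpoints keeps intervals nonempty. -/
lemma rearr {r : ℕ} {s : Fin r → Intv} (σ : Equiv.Perm (Fin r))
    (hj : ∀ p q : Fin r, p ≤ q → (s q).2 ≤ (s p).2)
    (hanti : ∀ p q : Fin r, p ≤ q → (s (σ q)).1 ≤ (s (σ p)).1)
    (hcj : ∀ t, (s t).1 ≤ (s t).2) :
    ∀ t : Fin r, (s (σ t)).1 ≤ (s t).2 := by
  intro t
  by_contra hcon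
  push_neg at hcon
  have hsub : (Finset.Iic t).image σ ⊆ Finset.Iio t := by
    intro v hv
    rcases Finset.mem_image.mp hv with ⟨u, hu, rfl⟩
    have hu' : u ≤ t := Finset.mem_Iic.mp hu
    rw [Finset.mem_Iio]
    by_contra hge
    push_neg at hge
    have h1 : (s (σ t)).1 ≤ (s (σ u)).1 := hanti u t hu'
    have h2 : (s (σ u)).1 ≤ (s (σ u)).2 := hcj _
    have h3 : (s (σ u)).2 ≤ (s t).2 := hj t (σ u) hge
    linarith
  have hcard := Finset.card_le_card hsub
  rw [Finset.card_image_of_injective _ σ.injective, Fin.card_Iic, Fin.card_Iio] at hcard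
  omega

/-- The tuple with left endpoints permuted by `ρ`. -/
noncomputable def XX {r : ℕ} (s : Fin r → Intv) (ρ : Equiv.Perm (Fin r)) : Fin r → Intv :=
  fun t => ((s (ρ t)).1, (s t).2)
set_option maxHeartbeats 1000000 in
lemma bubble {n r : ℕ} {s : Fin r → Intv}
    (hjd : ∀ p q : Fin r, p ≤ q → (s q).2 ≤ (s p).2)
    (hcj : ∀ t : Fin r, (s t).1 ≤ (s t).2)
    (hn : ∀ t p : Fin r, (s t).2 - (s p).1 ≤ (n : ℤ) + 1)
    (k : ℕ) (hk1 : 1 ≤ k) (hkr : k ≤ r) (K : Fin r) (hKv : (K : ℕ) = k - 1) :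
    ∀ d : ℕ, ∀ ρ : Equiv.Perm (Fin r), ∀ m : Fin r,
      k - 1 - (m : ℕ) ≤ d →
      (m : ℕ) < k →
      (s (ρ m)).1 = (s K).1 →
      (∀ t : Fin r, (m : ℕ) < (t : ℕ) → (t : ℕ) < k → (s (ρ t)).1 < (s K).1) →
      (∀ p q : Fin r, p ≤ q → (q : ℕ) < k → p ≠ m → q ≠ m →
        (s (ρ q)).1 ≤ (s (ρ p)).1) →
      (∀ t : Fin r, k ≤ (t : ℕ) → ρ t = t) →
      ∃ ρ' : Equiv.Perm (Fin r),
        Relation.ReflTransGen (Step n) (XX s ρ) (XX s ρ') ∧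
        (s (ρ' K)).1 = (s K).1 ∧
        (∀ p q : Fin r, p ≤ q → (q : ℕ) < k → p ≠ K → q ≠ K →
          (s (ρ' q)).1 ≤ (s (ρ' p)).1) ∧
        (∀ t : Fin r, k ≤ (t : ℕ) → ρ' t = t) := by
  intro d
  induction d with
  | zero =>
    intro ρ m hd hmk hval hstrict hsort hfix
    have hm' : m = K := Fin.ext (by omega)
    subst hm'
    exact ⟨ρ, .refl, hval, hsort, hfix⟩
  | succ d ih =>
    intro ρ m hd hmk hval hstrict hsort hfix
    by_cases hm : (m : ℕ) = k - 1
    · have hm' : m = K := Fin.ext (by omega)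
      subst hm'
      exact ⟨ρ, .refl, hval, hsort, hfix⟩
    · obtain ⟨m1, hm1v⟩ : ∃ m1 : Fin r, (m1 : ℕ) = (m : ℕ) + 1 :=
        ⟨⟨(m : ℕ) + 1, by omega⟩, rfl⟩
      have hmm1 : m < m1 := by rw [Fin.lt_def]; omega
      have hm1m : m1 ≠ m := ne_of_gt hmm1
      have hm1k : (m1 : ℕ) < k := by omega
      have hm1K : m1 ≤ K := by rw [Fin.le_def]; omega
      have h1 : ((XX s ρ) m1).1 < ((XX s ρ) m).1 := by
        show (s (ρ m1)).1 < (s (ρ m)).1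
        rw [hval]
        exact hstrict m1 (by omega) hm1k
      have h2 : ((XX s ρ) m).1 ≤ ((XX s ρ) m1).2 := by
        show (s (ρ m)).1 ≤ (s m1).2
        rw [hval]
        exact le_trans (hcj K) (hjd m1 K hm1K)
      have h3 : ((XX s ρ) m1).2 ≤ ((XX s ρ) m).2 := hjd m m1 (le_of_lt hmm1)
      have h5 : ((XX s ρ) m).2 - ((XX s ρ) m1).1 ≤ (n : ℤ) + 1 := hn m (ρ m1)
      have hstep := step_iswap n (XX s ρ) m m1 hmm1 h1 h2 h3 h5
      obtain ⟨ρ', hρ'⟩ : ∃ ρ' : Equiv.Perm (Fin r), ρ' = ρ * Equiv.swap m m1 := ⟨_, rfl⟩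
      have happm : ρ' m = ρ m1 := by
        rw [hρ']
        simp only [Equiv.Perm.mul_apply, Equiv.swap_apply_left]
      have happm1 : ρ' m1 = ρ m := by
        rw [hρ']
        simp only [Equiv.Perm.mul_apply, Equiv.swap_apply_right]
      have happ : ∀ t : Fin r, t ≠ m → t ≠ m1 → ρ' t = ρ t := by
        intro t h1' h2'
        rw [hρ']
        simp only [Equiv.Perm.mul_apply, Equiv.swap_apply_of_ne_of_ne h1' h2']
      have htgt : (fun t => if t = m then (((XX s ρ) m1).1, ((XX s ρ) m).2)
          else if t = m1 then (((XX s ρ) m).1, ((XX s ρ) m1).2) else (XX s ρ) t)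
          = XX s ρ' := by
        funext t
        by_cases htm : t = m
        · subst htm
          simp only [XX, happm, eq_self_iff_true, if_true]
        · by_cases htm1 : t = m1
          · subst htm1
            simp only [XX, happm1, if_neg htm, eq_self_iff_true, if_true]
          · simp only [if_neg htm, if_neg htm1, XX, happ t htm htm1]
      rw [htgt] at hstep
      have hval' : (s (ρ' m1)).1 = (s K).1 := by rw [happm1]; exact hval
      have hstrict' : ∀ t : Fin r, (m1 : ℕ) < (t : ℕ) → (t : ℕ) < k →
          (s (ρ' t)).1 < (s K).1 := by
        intro t ht1 ht2
        have htm : t ≠ m := by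
          intro h; rw [h] at ht1; omega
        have htm1 : t ≠ m1 := by
          intro h; rw [h] at ht1; omega
        rw [happ t htm htm1]
        exact hstrict t (by omega) ht2
      have hsort' : ∀ p q : Fin r, p ≤ q → (q : ℕ) < k → p ≠ m1 → q ≠ m1 →
          (s (ρ' q)).1 ≤ (s (ρ' p)).1 := by
        intro p q hpq hqk hp1 hq1
        by_cases hqm : q = m
        · by_cases hpm : p = m
          · rw [hpm, hqm]
          · rw [hqm, happm, happ p hpm hp1]
            have hpm1 : p ≤ m1 := by
              rw [Fin.le_def]
              have := Fin.le_def.mp hpq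
              rw [hqm] at hpq
              have := Fin.le_def.mp hpq
              omega
            exact hsort p m1 hpm1 hm1k hpm hm1m
        · by_cases hpm : p = m
          · rw [hpm, happm, happ q hqm hq1]
            have hmq : (m : ℕ) < (q : ℕ) := by
              have h4 := Fin.le_def.mp hpq
              rw [hpm] at hpq
              have h6 := Fin.le_def.mp hpq
              have : (q : ℕ) ≠ (m : ℕ) := fun h => hqm (Fin.ext h)
              omega
            exact hsort m1 q (by rw [Fin.le_def]; omega) hqk hm1m hqm
          · rw [happ p hpm hp1, happ q hqm hq1]
            exact hsort p q hpq hqk hpm hqm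
      have hfix' : ∀ t : Fin r, k ≤ (t : ℕ) → ρ' t = t := by
        intro t ht
        have htm : t ≠ m := by intro h; rw [h] at ht; omega
        have htm1 : t ≠ m1 := by intro h; rw [h] at ht; omega
        rw [happ t htm htm1]
        exact hfix t ht
      obtain ⟨ρ'', hreach, hv, hs', hf⟩ :=
        ih ρ' m1 (by omega) hm1k hval' hstrict' hsort' hfix'
      exact ⟨ρ'', Relation.ReflTransGen.head hstep hreach, hv, hs', hf⟩
set_option maxHeartbeats 1000000 in
lemma outer {n r : ℕ} {s : Fin r → Intv}
    (hjd : ∀ p q : Fin r, p ≤ q → (s q).2 ≤ (s p).2)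
    (hcj : ∀ t : Fin r, (s t).1 ≤ (s t).2)
    (hn : ∀ t p : Fin r, (s t).2 - (s p).1 ≤ (n : ℤ) + 1)
    (σ : Equiv.Perm (Fin r))
    (hσ : ∀ p q : Fin r, p ≤ q → (s (σ q)).1 ≤ (s (σ p)).1) :
    ∀ d : ℕ, ∃ ρ : Equiv.Perm (Fin r),
      Relation.ReflTransGen (Step n) (XX s σ) (XX s ρ) ∧
      (∀ t : Fin r, r - d ≤ (t : ℕ) → ρ t = t) ∧
      (∀ p q : Fin r, p ≤ q → (q : ℕ) < r - d → (s (ρ q)).1 ≤ (s (ρ p)).1) := by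
  intro d
  induction d with
  | zero =>
    exact ⟨σ, .refl, fun t ht => absurd t.isLt (by omega),
      fun p q hpq _ => hσ p q hpq⟩
  | succ d ih =>
    obtain ⟨ρ, hreach, hfix, hsort⟩ := ih
    by_cases hk0 : r - d = 0
    · exact ⟨ρ, hreach, fun t _ => hfix t (by omega), fun p q _ hq => absurd hq (by omega)⟩
    · have hk1 : 1 ≤ r - d := by omega
      obtain ⟨K, hKv⟩ : ∃ K : Fin r, (K : ℕ) = (r - d) - 1 := ⟨⟨(r - d) - 1, by omega⟩, rfl⟩
      obtain ⟨m0, hm0S, hm0max⟩ : ∃ m0 : Fin r,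
          ((m0 : ℕ) < r - d ∧ (s (ρ m0)).1 = (s K).1) ∧
          ∀ t : Fin r, (t : ℕ) < r - d → (s (ρ t)).1 = (s K).1 → t ≤ m0 := by
        classical
        have hmem : ρ.symm K ∈ Finset.univ.filter
            (fun t : Fin r => (t : ℕ) < r - d ∧ (s (ρ t)).1 = (s K).1) := by
          rw [Finset.mem_filter]
          refine ⟨Finset.mem_univ _, ?_, by rw [ρ.apply_symm_apply]⟩
          by_contra hge
          push_neg at hge
          have h1 := hfix (ρ.symm K) hge
          have h2 : ρ (ρ.symm K) = K := ρ.apply_symm_apply K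
          rw [h1] at h2
          rw [h2] at hge
          omega
        have hne : (Finset.univ.filter
            (fun t : Fin r => (t : ℕ) < r - d ∧ (s (ρ t)).1 = (s K).1)).Nonempty :=
          ⟨_, hmem⟩
        refine ⟨Finset.max' _ hne, ?_, ?_⟩
        · have := Finset.max'_mem _ hne
          rw [Finset.mem_filter] at this
          exact this.2
        · intro t h1 h2
          exact Finset.le_max' _ t (by rw [Finset.mem_filter]; exact ⟨Finset.mem_univ _, h1, h2⟩)
      obtain ⟨hm0k, hm0val⟩ := hm0S
      have hstrict : ∀ t : Fin r, (m0 : ℕ) < (t : ℕ) → (t : ℕ) < r - d →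
          (s (ρ t)).1 < (s K).1 := by
        intro t ht1 ht2
        have hle : (s (ρ t)).1 ≤ (s (ρ m0)).1 := hsort m0 t (by rw [Fin.le_def]; omega) ht2
        rw [hm0val] at hle
        rcases lt_or_eq_of_le hle with h | h
        · exact h
        · have := hm0max t ht2 h
          rw [Fin.le_def] at this
          omega
      obtain ⟨ρ₁, hreach₁, hval₁, hsort₁, hfix₁⟩ :=
        bubble hjd hcj hn (r - d) hk1 (by omega) K hKv ((r - d) - 1 - (m0 : ℕ)) ρ m0 le_rfl
          hm0k hm0val hstrict (fun p q hpq hqk _ _ => hsort p q hpq hqk) hfix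
      obtain ⟨p0, hp0⟩ : ∃ p0 : Fin r, p0 = ρ₁.symm K := ⟨_, rfl⟩
      have hρ₁p0 : ρ₁ p0 = K := by rw [hp0]; exact ρ₁.apply_symm_apply K
      have hp0k : (p0 : ℕ) < r - d := by
        by_contra hge
        push_neg at hge
        have h1 := hfix₁ p0 hge
        rw [h1] at hρ₁p0
        rw [hρ₁p0] at hge
        omega
      obtain ⟨ρ₂, hρ₂⟩ : ∃ ρ₂ : Equiv.Perm (Fin r), ρ₂ = ρ₁ * Equiv.swap K p0 := ⟨_, rfl⟩
      have hρ₂K : ρ₂ K = K := by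
        rw [hρ₂]
        simp only [Equiv.Perm.mul_apply, Equiv.swap_apply_left]
        exact hρ₁p0
      have hρ₂p0 : ρ₂ p0 = ρ₁ K := by
        rw [hρ₂]
        simp only [Equiv.Perm.mul_apply, Equiv.swap_apply_right]
      have hvals : ∀ t : Fin r, (s (ρ₂ t)).1 = (s (ρ₁ t)).1 := by
        intro t
        by_cases htK : t = K
        · rw [htK, hρ₂K, hval₁]
        · by_cases htp : t = p0
          · rw [htp, hρ₂p0, hρ₁p0, hval₁]
          · rw [hρ₂]
            simp only [Equiv.Perm.mul_apply, Equiv.swap_apply_of_ne_of_ne htK htp]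
      refine ⟨ρ₂, ?_, ?_, ?_⟩
      · have hXX : XX s ρ₂ = XX s ρ₁ := by
          funext t
          simp only [XX, hvals]
        rw [hXX]
        exact hreach.trans hreach₁
      · intro t ht
        by_cases htK : t = K
        · rw [htK]; exact hρ₂K
        · have htk : r - d ≤ (t : ℕ) := by
            have : (t : ℕ) ≠ (K : ℕ) := fun h => htK (Fin.ext h)
            omega
          have h2 : t ≠ p0 := by
            intro h; rw [h] at htk; omega
          rw [hρ₂]
          simp only [Equiv.Perm.mul_apply, Equiv.swap_apply_of_ne_of_ne htK h2]
          exact hfix₁ t htk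
      · intro p q hpq hq
        have hq' : (q : ℕ) < r - d - 1 := by omega
        have hp' : (p : ℕ) < r - d - 1 := lt_of_le_of_lt (Fin.le_def.mp hpq) hq'
        rw [hvals p, hvals q]
        exact hsort₁ p q hpq (by omega)
          (fun h => by rw [h] at hp'; omega)
          (fun h => by rw [h] at hq'; omega)
/-- for `s ∈ 𝕀_{n,+}^r` with `n ≥ n(s)` (i.e. `j_t - i_p ≤ n + 1` for all
`t, p`), there is `σ ∈ Σ_r` with `i_{σ(1)} ≥ ⋯ ≥ i_{σ(r)}` such that
`s₁ = ([i_{σ(1)},j_1],…,[i_{σ(r)},j_r]) ∈ 𝕀_{n,+}^r` and `s ∈ s̄₁[n]`. -/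
theorem stmt_5 (n r : ℕ) (s : Fin r → Intv) (hs : Iplus n s)
    (hn : ∀ t p : Fin r, (s t).2 - (s p).1 ≤ (n : ℤ) + 1) :
    ∃ σ : Equiv.Perm (Fin r),
      (∀ p q : Fin r, p ≤ q → (s (σ q)).1 ≤ (s (σ p)).1) ∧
      Iplus n (fun t => ((s (σ t)).1, (s t).2)) ∧
      s ∈ sbar n (fun t => ((s (σ t)).1, (s t).2)) := by
  classical
  obtain ⟨hmem, hdec0⟩ := hs
  have hjd : ∀ p q : Fin r, p ≤ q → (s q).2 ≤ (s p).2 := jdec hdec0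
  have hcj : ∀ t : Fin r, (s t).1 ≤ (s t).2 := by
    intro t
    have h := (hmem t).1
    change (0 : ℤ) ≤ (s t).2 - (s t).1 at h
    linarith
  obtain ⟨σ, hσ⟩ : ∃ σ : Equiv.Perm (Fin r),
      ∀ p q : Fin r, p ≤ q → (s (σ q)).1 ≤ (s (σ p)).1 := by
    refine ⟨Tuple.sort (fun t => -(s t).1), ?_⟩
    intro p q hpq
    have := Tuple.monotone_sort (fun t => -(s t).1) hpq
    simp only [Function.comp_apply] at this
    linarith
  have hre : ∀ t : Fin r, (s (σ t)).1 ≤ (s t).2 := rearr σ hjd hσ hcj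
  refine ⟨σ, hσ, ⟨?_, ?_⟩, ?_⟩
  · intro t
    refine ⟨?_, ?_⟩
    · show (0 : ℤ) ≤ (s t).2 - (s (σ t)).1
      have := hre t
      linarith
    · exact hn t (σ t)
  · intro p hp
    exact hdec0 p hp
  · obtain ⟨ρ, hreach, hfix, _⟩ := outer hjd hcj hn σ hσ r
    have hρ : ∀ t, ρ t = t := fun t => hfix t (by omega)
    have hXXρ : XX s ρ = s := by
      funext t
      simp [XX, hρ t]
    rw [hXXρ] at hreach
    have hXXσ : (fun t : Fin r => ((s (σ t)).1, (s t).2)) = XX s σ := rfl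
    rw [hXXσ]
    exact reach_sbar hreach
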